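/- Let p : E → S and f : F → S be pre-cohesive and g : F → E a geometric morphism over S that preserves pieces. Then the direct image g_* : F → E preserves weakly Kan objects: if F is weakly Kan in F (κ^{f_!}_{f*A, F} is iso for all A in S), then g_* F is weakly Kan in E. The key coherence is that the square with horizontal isomorphisms ρ and f_! γ (where γ : g*((g_* F)^E) → F^{g* E} is the canonical enrichment comparison) and vertical maps κ^{p_!} and κ^{f_!}, with bottom map the conjugation λ^ϱ, commutes for all E in E and F in F. -/

import Mathlib

open CategoryTheory Limits MonoidalCategory CartesianClosed

universe v u₁ u₂ u₃

variable (S : Type u₁) (E : Type u₂) [Category.{v} S] [Category.{v} E]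

/-- A pre-cohesive string of adjoint functors `p_! ⊣ p^* ⊣ p_* ⊣ p^!` with `p^*`, `p^!`
fully faithful, `p_!` preserving finite products, and the Nullstellensatz
(the canonical `θ : p_* ⟶ p_!` is epi; since the unit of `p^* ⊣ p_*` is invertible this is
equivalent to `p_*σ` being epi, where `σ` is the unit of `p_! ⊣ p^*`). -/
structure PreCohesive where
  pShrek : E ⥤ S
  pStar : S ⥤ E
  pLow : E ⥤ S
  pUpper : S ⥤ E
  adj₁ : pShrek ⊣ pStar
  adj₂ : pStar ⊣ pLow
  adj₃ : pLow ⊣ pUpper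
  starFull : pStar.Full
  starFaithful : pStar.Faithful
  upperFull : pUpper.Full
  upperFaithful : pUpper.Faithful
  piecesPreservesFiniteProducts : PreservesFiniteProducts pShrek
  nullstellensatz : ∀ X : E, Epi (pLow.map (adj₁.unit.app X))

variable {S E}

/-- The canonical natural map `θ_X : p_* X ⟶ p_! X`. -/
noncomputable def PreCohesive.theta (P : PreCohesive S E) (X : E) :
    P.pLow.obj X ⟶ P.pShrek.obj X :=
  letI := P.starFull
  letI := P.starFaithful
  P.pLow.map (P.adj₁.unit.app X) ≫ inv (P.adj₂.unit.app (P.pShrek.obj X))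

/-- The inverse `τ⁻¹ : A ⟶ p_!(p^* A)` of the counit of `p_! ⊣ p^*`. -/
noncomputable def PreCohesive.tauInv (P : PreCohesive S E) (A : S) :
    A ⟶ P.pShrek.obj (P.pStar.obj A) :=
  letI := P.starFull
  letI := P.starFaithful
  inv (P.adj₁.counit.app A)

section CCC

variable [CartesianMonoidalCategory S] [CartesianMonoidalCategory E]
  [MonoidalClosed S] [MonoidalClosed E]

/-- The canonical comparison `κ^{p_!}_{A,B} : p_!(B^A) ⟶ (p_! B)^{(p_! A)}`. -/
noncomputable def PreCohesive.kappa (P : PreCohesive S E) (A B : E) :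
    P.pShrek.obj (A ⟹ B) ⟶ (P.pShrek.obj A ⟹ P.pShrek.obj B) :=
  letI := P.piecesPreservesFiniteProducts
  (expComparison P.pShrek A).app B

/-- The canonical comparison `κ^{p^*}_{A,B} : p^*(B^A) ⟶ (p^* A ⟹ p^* B)` (`p^*` preserves
limits, being a right adjoint). -/
noncomputable def PreCohesive.kappaStar (P : PreCohesive S E) (A B : S) :
    P.pStar.obj (A ⟹ B) ⟶ (P.pStar.obj A ⟹ P.pStar.obj B) :=
  letI := P.adj₁.rightAdjoint_preservesLimits
  (expComparison P.pStar A).app B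

/-- An object `X` is weakly Kan if `κ^{p_!}_{p^* A, X}` is invertible for every `A : S`. -/
def PreCohesive.WeaklyKan (P : PreCohesive S E) (X : E) : Prop :=
  ∀ A : S, IsIso (P.kappa (P.pStar.obj A) X)

/-- Evaluation of `I ⟹ X` at a point `i : 1 ⟶ I`. -/
noncomputable def evPt {I : E} (i : 𝟙_ E ⟶ I) (X : E) : (I ⟹ X) ⟶ X :=
  (λ_ (I ⟹ X)).inv ≫ (i ▷ (I ⟹ X)) ≫ (ihom.ev I).app X

/-- A coequalizer fork in a category. -/
def IsCoeqFork {C : Type u₃} [Category.{v} C] {A B Q : C} (e₀ e₁ : A ⟶ B) (q : B ⟶ Q) : Prop :=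
  (e₀ ≫ q = e₁ ≫ q) ∧ ∀ ⦃Z : C⦄ (h : B ⟶ Z), e₀ ≫ h = e₁ ≫ h → ∃! k : Q ⟶ Z, q ≫ k = h

/-- `0,1 : 1 ⟶ I` is a connector for the pre-cohesive `P` if for every `X` the fork
`p_*(X^I) ⇉ p_* X → p_! X` is a coequalizer. -/
def PreCohesive.Connector (P : PreCohesive S E) (I : E) (i₀ i₁ : 𝟙_ E ⟶ I) : Prop :=
  ∀ X : E, IsCoeqFork (P.pLow.map (evPt i₀ X)) (P.pLow.map (evPt i₁ X)) (P.theta X)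

end CCC

section PiecesPreserving

variable [CartesianMonoidalCategory S] [CartesianMonoidalCategory E] [MonoidalClosed S]
  [MonoidalClosed E]
variable {F' : Type u₃} [Category.{v} F'] [CartesianMonoidalCategory F'] [MonoidalClosed F']

theorem stmt19_aux (P : PreCohesive S E)
    (gStar : E ⥤ F') (gLow : F' ⥤ E) (adjG : gStar ⊣ gLow) [PreservesFiniteLimits gStar]
    (fShrek : F' ⥤ S) [PreservesFiniteProducts fShrek]
    (varrho : gStar ⋙ fShrek ⟶ P.pShrek) [IsIso varrho]
    (E₀ : E) (F₀ : F') :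
    P.kappa E₀ (gLow.obj F₀) ≫
        (MonoidalClosed.pre (varrho.app E₀)).app (P.pShrek.obj (gLow.obj F₀)) ≫
        (ihom (fShrek.obj (gStar.obj E₀))).map
          (inv (varrho.app (gLow.obj F₀)) ≫ fShrek.map (adjG.counit.app F₀)) =
      inv (varrho.app (E₀ ⟹ gLow.obj F₀)) ≫
        fShrek.map ((expComparison gStar E₀).app (gLow.obj F₀) ≫
          (ihom (gStar.obj E₀)).map (adjG.counit.app F₀)) ≫
        (expComparison fShrek (gStar.obj E₀)).app F₀ := by
  haveI := P.piecesPreservesFiniteProducts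
  apply MonoidalClosed.uncurry_injective
  unfold PreCohesive.kappa
  rw [MonoidalClosed.uncurry_natural_left, MonoidalClosed.uncurry_natural_right, MonoidalClosed.uncurry_pre]
  rw [MonoidalClosed.uncurry_natural_left, MonoidalClosed.uncurry_natural_left, uncurry_expComparison]
  simp only [Category.assoc]
  rw [whisker_exchange_assoc]
  slice_lhs 2 3 => rw [expComparison_ev]
  simp only [Category.assoc]
  have hnat0 : P.pShrek.map ((ihom.ev E₀).app (gLow.obj F₀)) ≫ inv (varrho.app (gLow.obj F₀)) =
      inv (varrho.app (E₀ ⊗ (E₀ ⟹ gLow.obj F₀))) ≫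
        fShrek.map (gStar.map ((ihom.ev E₀).app (gLow.obj F₀))) := by
    rw [IsIso.eq_inv_comp, ← varrho.naturality_assoc]
    simp
  have hnat : P.pShrek.map ((ihom.ev E₀).app (gLow.obj F₀)) ≫ inv (varrho.app (gLow.obj F₀)) ≫
      fShrek.map (adjG.counit.app F₀) =
      inv (varrho.app (E₀ ⊗ (E₀ ⟹ gLow.obj F₀))) ≫
        fShrek.map (gStar.map ((ihom.ev E₀).app (gLow.obj F₀))) ≫
        fShrek.map (adjG.counit.app F₀) := by
    rw [← Category.assoc, hnat0, Category.assoc]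
  rw [hnat]
  have hmove : (fShrek.obj (gStar.obj E₀) ◁
      fShrek.map ((expComparison gStar E₀).app (gLow.obj F₀) ≫
        (ihom (gStar.obj E₀)).map (adjG.counit.app F₀))) ≫
      inv (CartesianMonoidalCategory.prodComparison fShrek (gStar.obj E₀) (gStar.obj E₀ ⟹ F₀)) =
      inv (CartesianMonoidalCategory.prodComparison fShrek (gStar.obj E₀)
        (gStar.obj (E₀ ⟹ gLow.obj F₀))) ≫
      fShrek.map (gStar.obj E₀ ◁ ((expComparison gStar E₀).app (gLow.obj F₀) ≫
        (ihom (gStar.obj E₀)).map (adjG.counit.app F₀))) :=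
    CartesianMonoidalCategory.prodComparison_inv_natural_whiskerLeft fShrek
      (A := gStar.obj E₀) ((expComparison gStar E₀).app (gLow.obj F₀) ≫
        (ihom (gStar.obj E₀)).map (adjG.counit.app F₀)) |>.symm
  slice_rhs 2 3 => rw [hmove]
  slice_rhs 3 4 => rw [← fShrek.map_comp]
  have hin : (gStar.obj E₀ ◁ ((expComparison gStar E₀).app (gLow.obj F₀) ≫
      (ihom (gStar.obj E₀)).map (adjG.counit.app F₀))) ≫ (ihom.ev (gStar.obj E₀)).app F₀ =
      inv (CartesianMonoidalCategory.prodComparison gStar E₀ (E₀ ⟹ gLow.obj F₀)) ≫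
        gStar.map ((ihom.ev E₀).app (gLow.obj F₀)) ≫ adjG.counit.app F₀ := by
    have e1 : (gStar.obj E₀ ◁ ((expComparison gStar E₀).app (gLow.obj F₀) ≫
        (ihom (gStar.obj E₀)).map (adjG.counit.app F₀))) ≫ (ihom.ev (gStar.obj E₀)).app F₀ =
        MonoidalClosed.uncurry ((expComparison gStar E₀).app (gLow.obj F₀) ≫
          (ihom (gStar.obj E₀)).map (adjG.counit.app F₀)) := (MonoidalClosed.uncurry_eq _).symm
    rw [e1, MonoidalClosed.uncurry_natural_right, uncurry_expComparison gStar E₀ (gLow.obj F₀), Category.assoc]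
  rw [hin]
  simp only [Functor.map_comp]
  have hpc : varrho.app (E₀ ⊗ (E₀ ⟹ gLow.obj F₀)) ≫
      CartesianMonoidalCategory.prodComparison P.pShrek E₀ (E₀ ⟹ gLow.obj F₀) =
      fShrek.map (CartesianMonoidalCategory.prodComparison gStar E₀ (E₀ ⟹ gLow.obj F₀)) ≫
      CartesianMonoidalCategory.prodComparison fShrek (gStar.obj E₀)
        (gStar.obj (E₀ ⟹ gLow.obj F₀)) ≫
      (varrho.app E₀ ⊗ₘ varrho.app (E₀ ⟹ gLow.obj F₀)) := by
    apply CartesianMonoidalCategory.hom_ext <;>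
      simp only [Category.assoc, CartesianMonoidalCategory.prodComparison_fst,
        CartesianMonoidalCategory.prodComparison_snd, CartesianMonoidalCategory.tensorHom_fst,
        CartesianMonoidalCategory.tensorHom_snd, CartesianMonoidalCategory.prodComparison_fst_assoc,
        CartesianMonoidalCategory.prodComparison_snd_assoc] <;>
      rw [← Category.assoc, ← fShrek.map_comp] <;>
      simp only [CartesianMonoidalCategory.prodComparison_fst,
        CartesianMonoidalCategory.prodComparison_snd] <;>
      rw [← Functor.comp_map, varrho.naturality]
  have hpc' : inv (CartesianMonoidalCategory.prodComparison P.pShrek E₀ (E₀ ⟹ gLow.obj F₀)) ≫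
      inv (varrho.app (E₀ ⊗ (E₀ ⟹ gLow.obj F₀))) =
      inv (varrho.app E₀ ⊗ₘ varrho.app (E₀ ⟹ gLow.obj F₀)) ≫
      inv (CartesianMonoidalCategory.prodComparison fShrek (gStar.obj E₀)
        (gStar.obj (E₀ ⟹ gLow.obj F₀))) ≫
      fShrek.map (inv (CartesianMonoidalCategory.prodComparison gStar E₀ (E₀ ⟹ gLow.obj F₀))) := by
    rw [Functor.map_inv, ← IsIso.inv_comp, ← IsIso.inv_comp, ← IsIso.inv_comp]
    congr 1
    simp only [Category.assoc]
    rw [hpc]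
  have hstar : varrho.app E₀ ▷ P.pShrek.obj (E₀ ⟹ gLow.obj F₀) ≫
      inv (CartesianMonoidalCategory.prodComparison P.pShrek E₀ (E₀ ⟹ gLow.obj F₀)) ≫
      inv (varrho.app (E₀ ⊗ (E₀ ⟹ gLow.obj F₀))) =
      (fShrek.obj (gStar.obj E₀) ◁ inv (varrho.app (E₀ ⟹ gLow.obj F₀))) ≫
      inv (CartesianMonoidalCategory.prodComparison fShrek (gStar.obj E₀)
        (gStar.obj (E₀ ⟹ gLow.obj F₀))) ≫
      fShrek.map (inv (CartesianMonoidalCategory.prodComparison gStar E₀ (E₀ ⟹ gLow.obj F₀))) := by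
    rw [hpc', inv_tensor, MonoidalCategory.tensorHom_def]
    simp
  slice_lhs 1 3 => rw [hstar]
  simp only [Category.assoc]

/-- let `p : E → S` and `f = p ∘ g : F → S` be pre-cohesive, and let
`g : F → E` be a geometric morphism over `S` that preserves pieces (`g_*` preserves
`S`-indexed coproducts, i.e. the mate `ϱ : f_! g^* ⟶ p_!` is invertible, and `f_!` inverts
the counit of `g`). Then the coherence square relating `κ^{p_!}`, `κ^{f_!}`, the canonical
enrichment `γ`, `ρ = ϱ⁻¹` and `λ = (f_! ξ) ∘ ρ_{g_*}` commutes for all `E₀ : E`,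
`F₀ : F`; consequently the direct image `g_*` preserves weakly Kan objects. -/
theorem stmt19 (P : PreCohesive S E)
    (gStar : E ⥤ F') (gLow : F' ⥤ E) (adjG : gStar ⊣ gLow) [PreservesFiniteLimits gStar]
    (fShrek : F' ⥤ S) (adjFs : fShrek ⊣ P.pStar ⋙ gStar)
    [(P.pStar ⋙ gStar).Full] [(P.pStar ⋙ gStar).Faithful]
    (fUpper : S ⥤ F') (adjFup : (gLow ⋙ P.pLow) ⊣ fUpper) [fUpper.Full] [fUpper.Faithful]
    [PreservesFiniteProducts fShrek]
    (fnull : ∀ Y : F', Epi ((gLow ⋙ P.pLow).map (adjFs.unit.app Y)))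
    (varrho : gStar ⋙ fShrek ⟶ P.pShrek)
    (hvarrho : ∀ X : E, varrho.app X =
      fShrek.map (gStar.map (P.adj₁.unit.app X)) ≫ adjFs.counit.app (P.pShrek.obj X))
    [IsIso varrho]
    (hcop : ∀ A : S, IsIso (adjG.unit.app (P.pStar.obj A)))
    (hxi : ∀ Y : F', IsIso (fShrek.map (adjG.counit.app Y))) :
    (∀ (E₀ : E) (F₀ : F'),
      P.kappa E₀ (gLow.obj F₀) ≫
          (MonoidalClosed.pre (varrho.app E₀)).app (P.pShrek.obj (gLow.obj F₀)) ≫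
          (ihom (fShrek.obj (gStar.obj E₀))).map
            (inv (varrho.app (gLow.obj F₀)) ≫ fShrek.map (adjG.counit.app F₀)) =
        inv (varrho.app (E₀ ⟹ gLow.obj F₀)) ≫
          fShrek.map ((expComparison gStar E₀).app (gLow.obj F₀) ≫
            (ihom (gStar.obj E₀)).map (adjG.counit.app F₀)) ≫
          (expComparison fShrek (gStar.obj E₀)).app F₀) ∧
    ∀ F₀ : F',
      (∀ A : S, IsIso ((expComparison fShrek (gStar.obj (P.pStar.obj A))).app F₀)) →
        P.WeaklyKan (gLow.obj F₀) := by
  haveI := P.piecesPreservesFiniteProducts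
  refine ⟨fun E₀ F₀ => stmt19_aux P gStar gLow adjG fShrek varrho E₀ F₀, ?_⟩
  intro F₀ hκ
  show ∀ A : S, IsIso (P.kappa (P.pStar.obj A) (gLow.obj F₀))
  intro A
  set E₀ := P.pStar.obj A with hE₀
  haveI hmu : IsIso (mateEquiv adjG adjG (expComparison gStar E₀)) := by
    have hiter : mateEquiv adjG adjG (expComparison gStar E₀) =
        conjugateEquiv ((ihom.adjunction E₀).comp adjG)
          (adjG.comp (ihom.adjunction (gStar.obj E₀))) ((CartesianMonoidalCategory.prodComparisonNatIso gStar E₀).inv) :=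
      iterated_mateEquiv_conjugateEquiv (ihom.adjunction E₀) (ihom.adjunction (gStar.obj E₀))
        adjG adjG ((CartesianMonoidalCategory.prodComparisonNatIso gStar E₀).inv)
    rw [hiter]
    infer_instance
  have hgam := mateEquiv_counit adjG adjG (expComparison gStar E₀) F₀
  haveI hc : IsIso (fShrek.map ((expComparison gStar E₀).app (gLow.obj F₀) ≫
      (ihom (gStar.obj E₀)).map (adjG.counit.app F₀))) := by
    rw [← hgam, Functor.map_comp]
    haveI := hxi ((ihom (gStar.obj E₀)).obj F₀)
    haveI : IsIso ((mateEquiv adjG adjG (expComparison gStar E₀)).app F₀) :=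
      NatIso.isIso_app_of_isIso _ _
    infer_instance
  haveI : IsIso ((expComparison fShrek (gStar.obj E₀)).app F₀) := hκ A
  haveI : IsIso (MonoidalClosed.pre (varrho.app E₀)) := by
    unfold MonoidalClosed.pre
    infer_instance
  haveI := hxi F₀
  have heq := stmt19_aux P gStar gLow adjG fShrek varrho E₀ F₀
  haveI : IsIso (P.kappa E₀ (gLow.obj F₀) ≫
      (MonoidalClosed.pre (varrho.app E₀)).app (P.pShrek.obj (gLow.obj F₀)) ≫
      (ihom (fShrek.obj (gStar.obj E₀))).map
        (inv (varrho.app (gLow.obj F₀)) ≫ fShrek.map (adjG.counit.app F₀))) := by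
    rw [heq]
    infer_instance
  exact IsIso.of_isIso_comp_right (P.kappa E₀ (gLow.obj F₀))
    ((MonoidalClosed.pre (varrho.app E₀)).app (P.pShrek.obj (gLow.obj F₀)) ≫
      (ihom (fShrek.obj (gStar.obj E₀))).map
        (inv (varrho.app (gLow.obj F₀)) ≫ fShrek.map (adjG.counit.app F₀)))

end PiecesPreserving
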